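/- Let L be an orthomodular lattice admitting a strong set of states. Let V be a finite type, x : V → L, n ≥ 2, and T, U : Fin n → Finset V, such that: every T(i) and every U(i) is nonempty; for each i and all distinct v, w ∈ T(i), x(v) ⊥ x(w), and likewise for each i and all distinct v, w ∈ U(i); and for every v ∈ V, the number of indices i with v ∈ T(i) equals the number of indices i with v ∈ U(i). Then the corresponding Mayet–Godowski equation holds: ⨅_{i ∈ Fin n} (⨆_{v ∈ T(i)} x(v)) = ⨅_{i ∈ Fin n} (⨆_{v ∈ U(i)} x(v)). -/
import Mathlib


/-- An ortholattice: a bounded lattice with an orthocomplementation. -/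
class Ortholattice (α : Type*) extends Lattice α, BoundedOrder α where
  ocompl : α → α
  sup_ocompl : ∀ a : α, a ⊔ ocompl a = ⊤
  inf_ocompl : ∀ a : α, a ⊓ ocompl a = ⊥
  ocompl_anti : ∀ a b : α, a ≤ b → ocompl b ≤ ocompl a
  ocompl_ocompl : ∀ a : α, ocompl (ocompl a) = a

postfix:max "ᗮ" => Ortholattice.ocompl

/-- An orthomodular lattice. -/
class OrthomodularLattice (α : Type*) extends Ortholattice α where
  orthomodular : ∀ a b : α, a ≤ b → b = a ⊔ (aᗮ ⊓ b)

/-- The Sasaki hook `x → y = x′ ∪ (x ∩ y)`. -/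
def oimp {α : Type*} [Ortholattice α] (x y : α) : α := xᗮ ⊔ (x ⊓ y)

/-- A (real-valued) state on an ortholattice. -/
structure OLState (α : Type*) [Ortholattice α] where
  val : α → ℝ
  nonneg : ∀ a : α, 0 ≤ val a
  le_one : ∀ a : α, val a ≤ 1
  map_top : val ⊤ = 1
  additive : ∀ a b : α, a ≤ bᗮ → val (a ⊔ b) = val a + val b

/-- A strong set of states. -/
def IsStrongSet {α : Type*} [Ortholattice α] (S : Set (OLState α)) : Prop :=
  ∀ a b : α, (∀ m ∈ S, m.val a = 1 → m.val b = 1) → a ≤ b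

lemma OLState.map_bot' {α : Type*} [Ortholattice α] (m : OLState α) : m.val ⊥ = 0 := by
  have h := m.additive ⊥ ⊥ bot_le
  simp only [sup_idem] at h
  linarith

lemma OLState.mono' {α : Type*} [OrthomodularLattice α] (m : OLState α) {a b : α}
    (h : a ≤ b) : m.val a ≤ m.val b := by
  have hb := OrthomodularLattice.orthomodular a b h
  have horth : a ≤ (aᗮ ⊓ b)ᗮ := by
    have : aᗮ ⊓ b ≤ aᗮ := inf_le_left
    have := Ortholattice.ocompl_anti _ _ this
    rwa [Ortholattice.ocompl_ocompl] at this
  have := m.additive a (aᗮ ⊓ b) horth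
  rw [← hb] at this
  have := m.nonneg (aᗮ ⊓ b)
  linarith [m.additive a (aᗮ ⊓ b) horth, m.nonneg (aᗮ ⊓ b)]

lemma OLState.sup_sum {α : Type*} [Ortholattice α] (m : OLState α)
    {V : Type*} [DecidableEq V] (x : V → α) (s : Finset V)
    (h : ∀ v ∈ s, ∀ w ∈ s, v ≠ w → x v ≤ (x w)ᗮ) :
    m.val (s.sup x) = ∑ v ∈ s, m.val (x v) := by
  induction s using Finset.cons_induction with
  | empty => simpa using m.map_bot'
  | cons a s ha ih =>
    rw [Finset.sup_cons, Finset.sum_cons]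
    have hsle : s.sup x ≤ (x a)ᗮ := by
      apply Finset.sup_le
      intro v hv
      exact h v (Finset.mem_cons.2 (Or.inr hv))
        a (Finset.mem_cons_self _ _) (by rintro rfl; exact ha hv)
    have horth : x a ≤ (s.sup x)ᗮ := by
      have := Ortholattice.ocompl_anti _ _ hsle
      rwa [Ortholattice.ocompl_ocompl] at this
    rw [m.additive _ _ horth, ih]
    intro v hv w hw hvw
    exact h v (Finset.mem_cons.2 (Or.inr hv)) w (Finset.mem_cons.2 (Or.inr hw)) hvw

lemma double_count {V : Type*} [Fintype V] [DecidableEq V] {n : ℕ}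
    (T : Fin n → Finset V) (f : V → ℝ) :
    ∑ i : Fin n, ∑ v ∈ T i, f v =
      ∑ v : V, ((Finset.univ.filter (fun i : Fin n => v ∈ T i)).card : ℝ) * f v := by
  have : ∀ i : Fin n, ∑ v ∈ T i, f v = ∑ v : V, if v ∈ T i then f v else 0 := by
    intro i
    rw [Finset.sum_ite_mem]
    congr 1
    simp [Finset.inter_eq_right]
  simp_rw [this]
  rw [Finset.sum_comm]
  congr 1
  ext v
  rw [← Finset.sum_filter, Finset.sum_const, nsmul_eq_mul]

lemma mg_le {α : Type*} [OrthomodularLattice α]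
    (S : Set (OLState α)) (hS : IsStrongSet S)
    (V : Type*) [Fintype V] [DecidableEq V] (x : V → α)
    (n : ℕ) (T U : Fin n → Finset V)
    (hTorth : ∀ i : Fin n, ∀ v ∈ T i, ∀ w ∈ T i, v ≠ w → x v ≤ (x w)ᗮ)
    (hUorth : ∀ i : Fin n, ∀ v ∈ U i, ∀ w ∈ U i, v ≠ w → x v ≤ (x w)ᗮ)
    (hcount : ∀ v : V,
      (Finset.univ.filter (fun i : Fin n => v ∈ T i)).card =
      (Finset.univ.filter (fun i : Fin n => v ∈ U i)).card) :
    Finset.univ.inf (fun i : Fin n => (T i).sup x) ≤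
      Finset.univ.inf (fun i : Fin n => (U i).sup x) := by
  apply Finset.le_inf
  intro j _
  apply hS
  intro m hm hma
  -- each T-sup has value 1
  have hT1 : ∀ i : Fin n, m.val ((T i).sup x) = 1 := by
    intro i
    have h1 : m.val (Finset.univ.inf (fun i : Fin n => (T i).sup x)) ≤ m.val ((T i).sup x) :=
      m.mono' (Finset.inf_le (Finset.mem_univ i))
    have h2 := m.le_one ((T i).sup x)
    linarith
  have hTsum : ∑ i : Fin n, m.val ((T i).sup x) = n := by
    simp [hT1]
  have key : ∑ i : Fin n, m.val ((U i).sup x) = n := by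
    have e1 : ∀ i : Fin n, m.val ((T i).sup x) = ∑ v ∈ T i, m.val (x v) :=
      fun i => m.sup_sum x (T i) (hTorth i)
    have e2 : ∀ i : Fin n, m.val ((U i).sup x) = ∑ v ∈ U i, m.val (x v) :=
      fun i => m.sup_sum x (U i) (hUorth i)
    calc ∑ i : Fin n, m.val ((U i).sup x)
        = ∑ i : Fin n, ∑ v ∈ U i, m.val (x v) := by simp_rw [e2]
      _ = ∑ v : V, ((Finset.univ.filter (fun i : Fin n => v ∈ U i)).card : ℝ) * m.val (x v) :=
          double_count U _
      _ = ∑ v : V, ((Finset.univ.filter (fun i : Fin n => v ∈ T i)).card : ℝ) * m.val (x v) := by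
          simp_rw [hcount]
      _ = ∑ i : Fin n, ∑ v ∈ T i, m.val (x v) := (double_count T _).symm
      _ = ∑ i : Fin n, m.val ((T i).sup x) := by simp_rw [e1]
      _ = n := hTsum
  -- each U-sup has value 1
  have hU1 : ∀ i : Fin n, m.val ((U i).sup x) = 1 := by
    have hz : ∑ i : Fin n, (1 - m.val ((U i).sup x)) = 0 := by
      rw [Finset.sum_sub_distrib, key]
      simp
    have hnn : ∀ i ∈ Finset.univ, (0:ℝ) ≤ 1 - m.val ((U i).sup x) :=
      fun i _ => by linarith [m.le_one ((U i).sup x)]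
    intro i
    have := (Finset.sum_eq_zero_iff_of_nonneg hnn).1 hz i (Finset.mem_univ i)
    linarith
  exact hU1 j

theorem mayet_godowski_equation {α : Type*} [OrthomodularLattice α]
    (S : Set (OLState α)) (hS : IsStrongSet S)
    (V : Type*) [Fintype V] [DecidableEq V] (x : V → α)
    (n : ℕ) (hn : 2 ≤ n) (T U : Fin n → Finset V)
    (hTne : ∀ i : Fin n, (T i).Nonempty) (hUne : ∀ i : Fin n, (U i).Nonempty)
    (hTorth : ∀ i : Fin n, ∀ v ∈ T i, ∀ w ∈ T i, v ≠ w → x v ≤ (x w)ᗮ)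
    (hUorth : ∀ i : Fin n, ∀ v ∈ U i, ∀ w ∈ U i, v ≠ w → x v ≤ (x w)ᗮ)
    (hcount : ∀ v : V,
      (Finset.univ.filter (fun i : Fin n => v ∈ T i)).card =
      (Finset.univ.filter (fun i : Fin n => v ∈ U i)).card) :
    Finset.univ.inf (fun i : Fin n => (T i).sup x) =
      Finset.univ.inf (fun i : Fin n => (U i).sup x) := by
  exact le_antisymm
    (mg_le S hS V x n T U hTorth hUorth hcount)
    (mg_le S hS V x n U T hUorth hTorth (fun v => (hcount v).symm))
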